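/- arXiv:2303.17897 — 2 statements merged into one kernel-verified Lean document; each statement's English description precedes it below -/
import Mathlib

section
/- There exists a rule R for broadcasting problems that satisfies weak equal treatment of equals but does not satisfy anonymity. -/
open Finset

variable {n : ℕ}

/-- A broadcasting problem: nonnegative entries and zero diagonal. -/
def IsProblem (A : Matrix (Fin n) (Fin n) ℝ) : Prop :=
  (∀ i j, 0 ≤ A i j) ∧ ∀ i, A i i = 0

/-- Total audience `‖A‖`. -/
noncomputable def totalAud (A : Matrix (Fin n) (Fin n) ℝ) : ℝ :=
  ∑ i, ∑ j, A i j

/-- `α_i(A)`, the total audience of team `i`. -/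
noncomputable def claimOf (A : Matrix (Fin n) (Fin n) ℝ) (i : Fin n) : ℝ :=
  ∑ j, (A i j + A j i)

/-- A rule: allocations add up to the total audience (efficiency). -/
def IsRule (R : Matrix (Fin n) (Fin n) ℝ → Fin n → ℝ) : Prop :=
  ∀ A, IsProblem A → ∑ i, R A i = totalAud A

/-- Additivity (AD). -/
def AdditiveRule (R : Matrix (Fin n) (Fin n) ℝ → Fin n → ℝ) : Prop :=
  ∀ A A', IsProblem A → IsProblem A' → ∀ i, R (A + A') i = R A i + R A' i

/-- The permuted problem `A^σ`, with entries `a^σ_{ij} = a_{σ(i)σ(j)}`. -/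
def permMat (σ : Equiv.Perm (Fin n)) (A : Matrix (Fin n) (Fin n) ℝ) :
    Matrix (Fin n) (Fin n) ℝ :=
  fun i j => A (σ i) (σ j)

/-- Anonymity (AN). -/
def Anonymous (R : Matrix (Fin n) (Fin n) ℝ → Fin n → ℝ) : Prop :=
  ∀ A, IsProblem A → ∀ σ : Equiv.Perm (Fin n), ∀ i, R A i = R (permMat σ A) (σ i)

/-- Weak equal treatment of equals (WETE). -/
def WETE (R : Matrix (Fin n) (Fin n) ℝ → Fin n → ℝ) : Prop :=
  ∀ A, IsProblem A → ∀ i j, A i j = A j i →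
    (∀ k, k ≠ i → k ≠ j → A i k = A j k ∧ A k i = A k j) → R A i = R A j

/-- Equal treatment of equals (ETE). -/
def ETE (R : Matrix (Fin n) (Fin n) ℝ → Fin n → ℝ) : Prop :=
  ∀ A, IsProblem A → ∀ i j,
    (∀ k, k ≠ i → k ≠ j → A i k = A j k ∧ A k i = A k j) → R A i = R A j

/-- Symmetry (SYM). -/
def SYM (R : Matrix (Fin n) (Fin n) ℝ → Fin n → ℝ) : Prop :=
  ∀ A, IsProblem A → ∀ i j, claimOf A i = claimOf A j → R A i = R A j

/-- Order preservation (OP). -/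
def OP (R : Matrix (Fin n) (Fin n) ℝ → Fin n → ℝ) : Prop :=
  ∀ A, IsProblem A → ∀ i j,
    (∀ k, k ≠ i → k ≠ j → A j k ≤ A i k ∧ A k j ≤ A k i) → R A j ≤ R A i

/-- Home order preservation (HOP). -/
def HOP (R : Matrix (Fin n) (Fin n) ℝ → Fin n → ℝ) : Prop :=
  ∀ A, IsProblem A → ∀ i j,
    (∀ k, k ≠ i → k ≠ j → A j k ≤ A i k ∧ A k j ≤ A k i) →
      A j i ≤ A i j → R A j ≤ R A i

/-- Away order preservation (AOP). -/
def AOP (R : Matrix (Fin n) (Fin n) ℝ → Fin n → ℝ) : Prop :=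
  ∀ A, IsProblem A → ∀ i j,
    (∀ k, k ≠ i → k ≠ j → A j k ≤ A i k ∧ A k j ≤ A k i) →
      A i j ≤ A j i → R A j ≤ R A i

/-- Null team (NT). -/
def NullTeam (R : Matrix (Fin n) (Fin n) ℝ → Fin n → ℝ) : Prop :=
  ∀ A, IsProblem A → ∀ i, (∀ j, A i j = 0 ∧ A j i = 0) → R A i = 0

/-- Essential team (ET). -/
def EssentialTeam (R : Matrix (Fin n) (Fin n) ℝ → Fin n → ℝ) : Prop :=
  ∀ A, IsProblem A → ∀ i, (∀ j k, j ≠ i → k ≠ i → A j k = 0) → R A i = claimOf A i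

/-- Maximum aspirations (MA). -/
def MaxAsp (R : Matrix (Fin n) (Fin n) ℝ → Fin n → ℝ) : Prop :=
  ∀ A, IsProblem A → ∀ i, R A i ≤ claimOf A i

/-- Weak upper bound (WUB). -/
def WUB (R : Matrix (Fin n) (Fin n) ℝ → Fin n → ℝ) : Prop :=
  ∀ A, IsProblem A → ∀ i, R A i ≤ totalAud A

/-- Non-negativity (NN). -/
def NonNeg (R : Matrix (Fin n) (Fin n) ℝ → Fin n → ℝ) : Prop :=
  ∀ A, IsProblem A → ∀ i, 0 ≤ R A i

/-- The equal-split rule. -/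
noncomputable def ES (A : Matrix (Fin n) (Fin n) ℝ) (i : Fin n) : ℝ :=
  claimOf A i / 2

/-- The uniform rule. -/
noncomputable def Unif (A : Matrix (Fin n) (Fin n) ℝ) (_i : Fin n) : ℝ :=
  totalAud A / (n : ℝ)

/-- Concede-and-divide. -/
noncomputable def CD (A : Matrix (Fin n) (Fin n) ℝ) (i : Fin n) : ℝ :=
  (((n : ℝ) - 1) * claimOf A i - totalAud A) / ((n : ℝ) - 2)

/-- The `EC` rule with parameter `lam`. -/
noncomputable def EC (lam : ℝ) (A : Matrix (Fin n) (Fin n) ℝ) (i : Fin n) : ℝ :=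
  lam * ES A i + (1 - lam) * CD A i

/-- The `UC` rule with parameter `lam`. -/
noncomputable def UC (lam : ℝ) (A : Matrix (Fin n) (Fin n) ℝ) (i : Fin n) : ℝ :=
  lam * Unif A i + (1 - lam) * CD A i

/-- The `UE` rule with parameter `lam`. -/
noncomputable def UE (lam : ℝ) (A : Matrix (Fin n) (Fin n) ℝ) (i : Fin n) : ℝ :=
  lam * Unif A i + (1 - lam) * ES A i

/-- `A^{i0}`: nullify the home (row) audiences of team `i`. -/
def rowZero (A : Matrix (Fin n) (Fin n) ℝ) (i : Fin n) : Matrix (Fin n) (Fin n) ℝ :=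
  fun j k => if j = i then 0 else A j k

/-- `A^{0i}`: nullify the away (column) audiences of team `i`. -/
def colZero (A : Matrix (Fin n) (Fin n) ℝ) (i : Fin n) : Matrix (Fin n) (Fin n) ℝ :=
  fun j k => if k = i then 0 else A j k

theorem exists_wete_not_anonymous (n : ℕ) (hn : 3 ≤ n) :
    ∃ R : Matrix (Fin n) (Fin n) ℝ → Fin n → ℝ,
      IsRule R ∧ WETE R ∧ ¬ Anonymous R := by
  classical
  have h0 : 0 < n := by omega
  have h1 : 1 < n := by omega
  set i0 : Fin n := ⟨0, h0⟩ with hi0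
  set i1 : Fin n := ⟨1, h1⟩ with hi1
  have hne : i0 ≠ i1 := by
    simp [hi0, hi1, Fin.ext_iff]
  -- the perturbation vector
  set c : Fin n → ℝ := fun i => if i = i0 then 1 else if i = i1 then -1 else 0 with hc
  have hcsum : ∑ i, c i = 0 := by
    have hsplit : ∀ i, c i = (if i = i0 then (1:ℝ) else 0) + (if i = i1 then (-1:ℝ) else 0) := by
      intro i
      rw [hc]
      by_cases h : i = i0 <;> by_cases h' : i = i1 <;> simp_all [hne.symm]
    simp only [hsplit]
    rw [Finset.sum_add_distrib,
      Finset.sum_ite_eq' Finset.univ i0 (fun _ => (1:ℝ)),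
      Finset.sum_ite_eq' Finset.univ i1 (fun _ => (-1:ℝ))]
    simp
  -- "generic" predicate: no two distinct equal teams
  set P : Matrix (Fin n) (Fin n) ℝ → Prop := fun A =>
    ∃ p q : Fin n, p ≠ q ∧ A p q = A q p ∧
      ∀ k, k ≠ p → k ≠ q → A p k = A q k ∧ A k p = A k q with hP
  set R : Matrix (Fin n) (Fin n) ℝ → Fin n → ℝ := fun A i =>
    ES A i + (if P A then 0 else c i) with hR
  have hES : ∀ A : Matrix (Fin n) (Fin n) ℝ, ∑ i, ES A i = totalAud A := by
    intro A
    have : ∑ i, claimOf A i = totalAud A + totalAud A := by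
      unfold claimOf totalAud
      calc ∑ i : Fin n, ∑ j : Fin n, (A i j + A j i)
          = ∑ i : Fin n, (∑ j : Fin n, A i j + ∑ j : Fin n, A j i) := by
            simp [Finset.sum_add_distrib]
        _ = (∑ i : Fin n, ∑ j : Fin n, A i j) + ∑ i : Fin n, ∑ j : Fin n, A j i :=
            Finset.sum_add_distrib
        _ = (∑ i : Fin n, ∑ j : Fin n, A i j) + ∑ i : Fin n, ∑ j : Fin n, A i j := by
            rw [Finset.sum_comm]
    unfold ES
    rw [← Finset.sum_div, this]
    ring
  have hclaim : ∀ A : Matrix (Fin n) (Fin n) ℝ, IsProblem A → ∀ i j : Fin n,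
      (∀ k, k ≠ i → k ≠ j → A i k = A j k ∧ A k i = A k j) →
      claimOf A i = claimOf A j := by
    intro A hA i j hk
    unfold claimOf
    refine Fintype.sum_equiv (Equiv.swap i j) _ _ ?_
    intro k
    rcases eq_or_ne k i with rfl | hki
    · simp [Equiv.swap_apply_left, hA.2]
    rcases eq_or_ne k j with rfl | hkj
    · simp [Equiv.swap_apply_right]; ring
    · rw [Equiv.swap_apply_of_ne_of_ne hki hkj]
      obtain ⟨h1, h2⟩ := hk k hki hkj
      rw [h1, h2]
  refine ⟨R, ?_, ?_, ?_⟩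
  · -- IsRule
    intro A hA
    rw [hR]
    simp only
    rw [Finset.sum_add_distrib, hES]
    by_cases hPA : P A
    · simp [hPA]
    · simp [hPA, hcsum]
  · -- WETE
    intro A hA i j hij hk
    rcases eq_or_ne i j with rfl | hne'
    · rfl
    have hPA : P A := ⟨i, j, hne', hij, hk⟩
    rw [hR]
    simp only [if_pos hPA]
    unfold ES
    rw [hclaim A hA i j hk]
  · -- not Anonymous
    intro han
    set A : Matrix (Fin n) (Fin n) ℝ :=
      fun i j => if i = j then 0 else (i : ℝ) + 1 with hAdef
    have hA : IsProblem A := by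
      constructor
      · intro i j
        rw [hAdef]
        by_cases h : i = j <;> simp [h] <;> positivity
      · intro i; simp [hAdef]
    set σ : Equiv.Perm (Fin n) := Equiv.swap i0 i1 with hσ
    have key := han A hA σ i0
    have hσ0 : σ i0 = i1 := Equiv.swap_apply_left i0 i1
    have hσ1 : σ i1 = i0 := Equiv.swap_apply_right i0 i1
    -- A is generic
    have hPA : ¬ P A := by
      rintro ⟨p, q, hpq, heq, -⟩
      apply hpq
      rw [hAdef] at heq
      simp [hpq, hpq.symm] at heq
      have : (p : ℕ) = (q : ℕ) := Nat.cast_injective heq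
      exact Fin.ext this
    -- permMat σ A is generic
    have hPA' : ¬ P (permMat σ A) := by
      rintro ⟨p, q, hpq, heq, -⟩
      have hσpq : σ p ≠ σ q := fun h => hpq (σ.injective h)
      unfold permMat at heq
      rw [hAdef] at heq
      simp [hσpq, hσpq.symm] at heq
      have : ((σ p : Fin n) : ℕ) = ((σ q : Fin n) : ℕ) := Nat.cast_injective heq
      exact hσpq (Fin.ext this)
    have hclaim' : claimOf (permMat σ A) i1 = claimOf A i0 := by
      unfold claimOf permMat
      refine Fintype.sum_equiv σ _ _ ?_
      intro k
      rw [hσ1]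
    rw [hR] at key
    simp only [if_neg hPA, if_neg hPA', hσ0] at key
    have hES' : ES (permMat σ A) i1 = ES A i0 := by
      unfold ES; rw [hclaim']
    rw [hES'] at key
    have hc0 : c i0 = 1 := by simp [hc]
    have hc1 : c i1 = -1 := by simp [hc, hne.symm]
    rw [hc0, hc1] at key
    linarith
end

section
/- For every broadcasting problem A and every team i ∈ N, the equal-split rule satisfies ES_i(A) = (n/(2(n−1)))·U_i(A) + ((n−2)/(2(n−1)))·CD_i(A); consequently, every rule of the form λ·ES + (1−λ)·CD with λ ∈ [0,1] and every rule of the form λ·U + (1−λ)·ES with λ ∈ [0,1] can be written as μ·U + (1−μ)·CD for some μ ∈ [0,1]. -/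
open Finset

variable {n : ℕ}

theorem es_combination_of_unif_and_cd (n : ℕ) (hn : 3 ≤ n) :
    (∀ A : Matrix (Fin n) (Fin n) ℝ, IsProblem A → ∀ i,
      ES A i = ((n : ℝ) / (2 * ((n : ℝ) - 1))) * Unif A i
        + (((n : ℝ) - 2) / (2 * ((n : ℝ) - 1))) * CD A i) ∧
    (∀ lam : ℝ, lam ∈ Set.Icc (0 : ℝ) 1 →
      ∃ mu ∈ Set.Icc (0 : ℝ) 1,
        ∀ A : Matrix (Fin n) (Fin n) ℝ, IsProblem A → ∀ i,
          lam * ES A i + (1 - lam) * CD A i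
            = mu * Unif A i + (1 - mu) * CD A i) ∧
    (∀ lam : ℝ, lam ∈ Set.Icc (0 : ℝ) 1 →
      ∃ mu ∈ Set.Icc (0 : ℝ) 1,
        ∀ A : Matrix (Fin n) (Fin n) ℝ, IsProblem A → ∀ i,
          lam * Unif A i + (1 - lam) * ES A i
            = mu * Unif A i + (1 - mu) * CD A i) := by
  have h2 : (2:ℝ) < (n:ℝ) := by exact_mod_cast lt_of_lt_of_le (by norm_num) hn
  have hd1 : ((n:ℝ) - 1) ≠ 0 := by linarith
  have hd2 : ((n:ℝ) - 2) ≠ 0 := by linarith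
  have hn0 : (n:ℝ) ≠ 0 := by linarith
  have key : ∀ A : Matrix (Fin n) (Fin n) ℝ, ∀ i,
      ES A i = ((n : ℝ) / (2 * ((n : ℝ) - 1))) * Unif A i
        + (((n : ℝ) - 2) / (2 * ((n : ℝ) - 1))) * CD A i := by
    intro A i
    simp only [ES, Unif, CD]
    field_simp
    ring
  have hc0 : 0 ≤ (n : ℝ) / (2 * ((n : ℝ) - 1)) := div_nonneg (by linarith) (by linarith)
  have hc1 : (n : ℝ) / (2 * ((n : ℝ) - 1)) ≤ 1 := by
    rw [div_le_one (by linarith)]; linarith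
  refine ⟨fun A _ i => key A i, ?_, ?_⟩
  · intro lam hlam
    obtain ⟨hl0, hl1⟩ := hlam
    refine ⟨lam * ((n : ℝ) / (2 * ((n : ℝ) - 1))), ⟨mul_nonneg hl0 hc0, ?_⟩, ?_⟩
    · calc lam * ((n : ℝ) / (2 * ((n : ℝ) - 1))) ≤ 1 * 1 :=
        mul_le_mul hl1 hc1 hc0 zero_le_one
      _ = 1 := by ring
    · intro A hA i
      rw [key A i]
      have hsum : (n : ℝ) / (2 * ((n : ℝ) - 1)) + ((n : ℝ) - 2) / (2 * ((n : ℝ) - 1)) = 1 := by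
        field_simp; ring
      linear_combination (lam * CD A i) * hsum
  · intro lam hlam
    obtain ⟨hl0, hl1⟩ := hlam
    refine ⟨lam + (1 - lam) * ((n : ℝ) / (2 * ((n : ℝ) - 1))), ⟨?_, ?_⟩, ?_⟩
    · have := mul_nonneg (by linarith : (0:ℝ) ≤ 1 - lam) hc0; linarith
    · have : (1 - lam) * ((n : ℝ) / (2 * ((n : ℝ) - 1))) ≤ (1 - lam) * 1 :=
        mul_le_mul_of_nonneg_left hc1 (by linarith)
      linarith
    · intro A hA i
      rw [key A i]
      have hsum : (n : ℝ) / (2 * ((n : ℝ) - 1)) + ((n : ℝ) - 2) / (2 * ((n : ℝ) - 1)) = 1 := by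
        field_simp; ring
      linear_combination ((1 - lam) * CD A i) * hsum
end
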